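/- Ordering of non-symmetric solutions: suppose L < 0, r, r₁, r₂ ∈ (0, 1) with r = V((K+L)r), r₁ = V(K r₁ + L r₂), r₂ = V(K r₂ + L r₁), and r₁ > r₂. Then r₂ < r < r₁. -/

import Mathlib

/-!
`V` is the derivative of the cumulant generating function of `cos` under Lebesgue measure on
`(0, 2π]`, so `V'` is the variance of a tilted measure: `V` is strictly increasing, and `V 0 = 0`.
Expanding `exp (x cos θ)` in powers of `x`, `V x / x = A (x²) / B (x²)` for the power series
`A u = ∑ b k / (2k + 2) * u ^ k` and `B u = ∑ b k * u ^ k`, `b k = (∫ cos ^ (2k)) / (2k)! > 0`;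
the coefficient ratio `1 / (2k + 2)` decreases, hence so does `V x / x` on `x > 0`.
Now `r = V ((K + L) r) > 0` forces `K + L > 0`. As `L < 0` and `r₂ < r₁`, monotonicity of `V`
gives `V ((K + L) r₁) < r₁` and `r₂ < V ((K + L) r₂)`, so `V ((K + L) s) / s`, strictly
decreasing in `s > 0`, is `> 1` at `r₂`, `= 1` at `r` and `< 1` at `r₁`.
-/

open Real MeasureTheory intervalIntegral

noncomputable def V (x : ℝ) : ℝ :=
  (∫ θ in (0:ℝ)..(2*π), Real.cos θ * Real.exp (x * Real.cos θ)) /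
  (∫ θ in (0:ℝ)..(2*π), Real.exp (x * Real.cos θ))

open Nat ProbabilityTheory Set

theorem hasSum_integral_pow_mul_exp {Ω : Type*} [MeasurableSpace Ω] {μ : Measure Ω}
    [IsFiniteMeasure μ] {X : Ω → ℝ} (hX : AEStronglyMeasurable X μ) {C : ℝ}
    (hC : ∀ ω, |X ω| ≤ C) (m : ℕ) (x : ℝ) :
    HasSum (fun n : ℕ => x ^ n / n ! * ∫ ω, X ω ^ (n + m) ∂μ)
      (∫ ω, X ω ^ m * exp (x * X ω) ∂μ) := by
  set F : ℕ → Ω → ℝ := fun n ω => x ^ n / n ! * X ω ^ (n + m)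
  have hF_le (n : ℕ) (ω : Ω) : ‖F n ω‖ ≤ |x| ^ n / n ! * C ^ (n + m) := by
    simp only [F, norm_mul, norm_div, norm_pow, Real.norm_eq_abs, Nat.abs_cast]
    gcongr
    exact hC ω
  have hF_int (n : ℕ) : Integrable (F n) μ :=
    .of_bound ((hX.pow _).const_mul _) _ (ae_of_all _ (hF_le n))
  have hF_sum : Summable fun n => ∫ ω, ‖F n ω‖ ∂μ := by
    refine .of_nonneg_of_le (fun n => integral_nonneg fun ω => norm_nonneg _) (fun n => ?_)
      ((summable_pow_div_factorial (|x| * C)).mul_right (C ^ m * μ.real univ))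
    calc ∫ ω, ‖F n ω‖ ∂μ ≤ |x| ^ n / n ! * C ^ (n + m) * μ.real univ :=
          (le_abs_self _).trans <| norm_integral_le_of_norm_le_const <|
            ae_of_all _ fun ω => (norm_norm (F n ω)).le.trans (hF_le n ω)
      _ = (|x| * C) ^ n / n ! * (C ^ m * μ.real univ) := by ring
  have hF_hasSum (ω : Ω) : HasSum (F · ω) (X ω ^ m * exp (x * X ω)) := by
    have hexp := (NormedSpace.expSeries_div_hasSum_exp (x * X ω)).mul_left (X ω ^ m)
    rw [← Real.exp_eq_exp_ℝ] at hexp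
    refine hexp.congr_fun fun n => ?_
    simp only [F]
    ring
  rw [integral_congr_ae (ae_of_all _ fun ω => (hF_hasSum ω).tsum_eq.symm)]
  simpa only [F, MeasureTheory.integral_const_mul] using
    hasSum_integral_of_summable_integral_norm hF_int hF_sum

theorem pow_mul_pow_le_pow_mul_pow {s t : ℝ} (hs : 0 ≤ s) (hst : s ≤ t) {j k : ℕ}
    (hjk : j ≤ k) :
    t ^ j * s ^ k ≤ s ^ j * t ^ k := by
  obtain ⟨d, rfl⟩ := Nat.exists_eq_add_of_le hjk
  have ht : 0 ≤ t := hs.trans hst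
  calc t ^ j * s ^ (j + d) = s ^ j * t ^ j * s ^ d := by ring
    _ ≤ s ^ j * t ^ j * t ^ d := by gcongr
    _ = s ^ j * t ^ (j + d) := by ring

theorem HasSum.pos_of_add_swap {α : Type*} {h : α × α → ℝ} {S : ℝ} (hh : HasSum h S)
    (hnonneg : ∀ p : α × α, 0 ≤ h p + h p.swap) {p₀ : α × α} (hp₀ : 0 < h p₀ + h p₀.swap) :
    0 < S := by
  have hswap : HasSum (fun p : α × α => h p.swap) S := (Equiv.prodComm α α).hasSum_iff.2 hh
  linarith [hasSum_lt (f := 0) (g := fun p => h p + h p.swap) hnonneg hp₀ hasSum_zero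
    (hh.add hswap)]

/-- Biernacki–Krzyż: if `a k / b k` decreases, so does `(∑ a k u ^ k) / (∑ b k u ^ k)` on
`u ≥ 0`. Pairing the `(j, k)` and `(k, j)` terms of the double series, each pair is nonnegative. -/
theorem HasSum.mul_lt_mul_of_ratio_antitone {a b : ℕ → ℝ} {s t As Bs At Bt : ℝ}
    (ha : ∀ k, 0 ≤ a k) (hb : ∀ k, 0 ≤ b k)
    (hab : ∀ ⦃j k⦄, j ≤ k → a k * b j ≤ a j * b k) (hab₀₁ : a 1 * b 0 < a 0 * b 1)
    (hs : 0 ≤ s) (hst : s < t)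
    (hAs : HasSum (fun k => a k * s ^ k) As) (hBs : HasSum (fun k => b k * s ^ k) Bs)
    (hAt : HasSum (fun k => a k * t ^ k) At) (hBt : HasSum (fun k => b k * t ^ k) Bt) :
    At * Bs < As * Bt := by
  have ht : 0 ≤ t := hs.trans hst.le
  have hprod {u v A B : ℝ} (hu : 0 ≤ u) (hv : 0 ≤ v) (hA : HasSum (fun k => a k * u ^ k) A)
      (hB : HasSum (fun k => b k * v ^ k) B) :
      HasSum (fun p : ℕ × ℕ => a p.1 * u ^ p.1 * (b p.2 * v ^ p.2)) (A * B) :=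
    hA.mul hB <| hA.summable.mul_of_nonneg hB.summable (fun k => mul_nonneg (ha k) (by positivity))
      (fun k => mul_nonneg (hb k) (by positivity))
  have hpair (j k : ℕ) :
      a j * s ^ j * (b k * t ^ k) - a j * t ^ j * (b k * s ^ k)
        + (a k * s ^ k * (b j * t ^ j) - a k * t ^ k * (b j * s ^ j))
        = (a j * b k - a k * b j) * (s ^ j * t ^ k - t ^ j * s ^ k) := by ring
  refine sub_pos.1 <| ((hprod hs ht hAs hBt).sub (hprod ht hs hAt hBs)).pos_of_add_swap
    (p₀ := (0, 1)) (fun ⟨j, k⟩ => ?_) ?_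
  · rw [Prod.swap_prod_mk, hpair]
    rcases le_total j k with hjk | hkj
    · exact mul_nonneg (sub_nonneg.2 (hab hjk))
        (sub_nonneg.2 (pow_mul_pow_le_pow_mul_pow hs hst.le hjk))
    · refine mul_nonneg_of_nonpos_of_nonpos (sub_nonpos.2 (hab hkj)) (sub_nonpos.2 ?_)
      simpa only [mul_comm] using pow_mul_pow_le_pow_mul_pow hs hst.le hkj
  · rw [Prod.swap_prod_mk, hpair]
    simpa using mul_pos (sub_pos.2 hab₀₁) (sub_pos.2 hst)

noncomputable def cosMoment (n : ℕ) : ℝ := ∫ θ in 0..2 * π, cos θ ^ n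

theorem hasSum_integral_cos_pow_mul_exp (m : ℕ) (x : ℝ) :
    HasSum (fun n : ℕ => x ^ n / n ! * cosMoment (n + m))
      (∫ θ in 0..2 * π, cos θ ^ m * exp (x * cos θ)) := by
  simp only [cosMoment, integral_of_le two_pi_pos.le]
  exact hasSum_integral_pow_mul_exp continuous_cos.aestronglyMeasurable abs_cos_le_one m x

theorem cosMoment_add_two (n : ℕ) : cosMoment (n + 2) = (n + 1) / (n + 2) * cosMoment n := by
  simp [cosMoment, integral_cos_pow]

theorem cosMoment_two_mul_add_one (k : ℕ) : cosMoment (2 * k + 1) = 0 := by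
  induction k with
  | zero => simp [cosMoment, integral_cos]
  | succ k ih => rw [show 2 * (k + 1) + 1 = 2 * k + 1 + 2 by ring, cosMoment_add_two, ih, mul_zero]

theorem cosMoment_two_mul_pos (k : ℕ) : 0 < cosMoment (2 * k) := by
  induction k with
  | zero => simpa [cosMoment] using two_pi_pos
  | succ k ih =>
    rw [show 2 * (k + 1) = 2 * k + 2 by ring, cosMoment_add_two]
    positivity

noncomputable def expCosCoeff (k : ℕ) : ℝ := cosMoment (2 * k) / (2 * k)!

theorem expCosCoeff_pos (k : ℕ) : 0 < expCosCoeff k :=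
  div_pos (cosMoment_two_mul_pos k) (by positivity)

theorem hasSum_integral_exp_mul_cos (x : ℝ) :
    HasSum (fun k => expCosCoeff k * (x ^ 2) ^ k) (∫ θ in 0..2 * π, exp (x * cos θ)) := by
  have h := hasSum_integral_cos_pow_mul_exp 0 x
  simp only [pow_zero, one_mul, add_zero] at h
  rw [← (mul_right_injective₀ two_ne_zero).hasSum_iff] at h
  · refine h.congr_fun fun k => ?_
    simp only [Function.comp_apply, expCosCoeff, ← pow_mul]
    ring
  · rintro n hn
    obtain ⟨k, rfl | rfl⟩ := n.even_or_odd'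
    · exact absurd ⟨k, rfl⟩ hn
    · rw [cosMoment_two_mul_add_one, mul_zero]

theorem hasSum_integral_cos_mul_exp_div {x : ℝ} (hx : x ≠ 0) :
    HasSum (fun k => expCosCoeff k / (2 * k + 2) * (x ^ 2) ^ k)
      ((∫ θ in 0..2 * π, cos θ * exp (x * cos θ)) / x) := by
  have h := hasSum_integral_cos_pow_mul_exp 1 x
  simp only [pow_one] at h
  have hg : Function.Injective fun k : ℕ => 2 * k + 1 := fun a b hab => by
    simp only at hab
    omega
  rw [← hg.hasSum_iff] at h
  · rw [← hasSum_mul_left_iff hx, mul_div_cancel₀ _ hx]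
    refine h.congr_fun fun k => ?_
    rw [Function.comp_apply, cosMoment_add_two, Nat.factorial_succ, expCosCoeff]
    push_cast
    field_simp
    ring
  · rintro n hn
    obtain ⟨k, rfl | rfl⟩ := n.even_or_odd'
    · rw [cosMoment_two_mul_add_one, mul_zero]
    · exact absurd ⟨k, rfl⟩ hn

theorem integral_exp_mul_cos_pos (x : ℝ) : 0 < ∫ θ in 0..2 * π, exp (x * cos θ) :=
  intervalIntegral_pos_of_pos ((by fun_prop : Continuous _).intervalIntegrable _ _)
    (fun _ => exp_pos _) two_pi_pos

theorem strictAntiOn_V_div : StrictAntiOn (fun x => V x / x) (Ioi 0) := by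
  intro y (hy : 0 < y) x (hx : 0 < x) hyx
  have key := HasSum.mul_lt_mul_of_ratio_antitone (a := fun k => expCosCoeff k / (2 * k + 2))
    (fun k => (div_pos (expCosCoeff_pos k) (by positivity)).le) (fun k => (expCosCoeff_pos k).le)
    (fun j k hjk => ?_) ?_ (sq_nonneg y) (pow_lt_pow_left₀ hyx hy.le two_ne_zero)
    (hasSum_integral_cos_mul_exp_div hy.ne') (hasSum_integral_exp_mul_cos y)
    (hasSum_integral_cos_mul_exp_div hx.ne') (hasSum_integral_exp_mul_cos x)
  · simp only [V, div_right_comm _ _ x, div_right_comm _ _ y]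
    rwa [div_lt_div_iff₀ (integral_exp_mul_cos_pos x) (integral_exp_mul_cos_pos y)]
  · have hj := expCosCoeff_pos j
    have hk := expCosCoeff_pos k
    rw [div_mul_eq_mul_div, div_mul_eq_mul_div, mul_comm (expCosCoeff k)]
    gcongr
  · have := mul_pos (expCosCoeff_pos 0) (expCosCoeff_pos 1)
    norm_num
    linarith

theorem integrableExpSet_cos :
    integrableExpSet cos (volume.restrict (Ioc 0 (2 * π))) = univ :=
  eq_univ_of_forall fun t => (by fun_prop : Continuous fun θ => exp (t * cos θ)).integrableOn_Ioc

theorem V_eq_deriv_cgf : V = deriv (cgf cos (volume.restrict (Ioc 0 (2 * π)))) := by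
  ext x
  rw [deriv_cgf (by simp [integrableExpSet_cos]), V, mgf, integral_of_le two_pi_pos.le,
    integral_of_le two_pi_pos.le]

theorem integral_sq_cos_sub_mul_exp_pos (v x : ℝ) :
    0 < ∫ θ in 0..2 * π, (cos θ - v) ^ 2 * exp (x * cos θ) := by
  obtain ⟨c, hc, hcv⟩ : ∃ c ∈ Icc 0 (2 * π), cos c ≠ v := by
    by_cases hv : v = 1
    · exact ⟨π, ⟨pi_pos.le, by linarith [pi_pos]⟩, by simp [hv]; norm_num⟩
    · exact ⟨0, ⟨le_rfl, two_pi_pos.le⟩, by simpa [eq_comm] using hv⟩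
  refine intervalIntegral.integral_pos two_pi_pos (by fun_prop) (fun θ _ => by positivity)
    ⟨c, hc, mul_pos (sq_pos_of_ne_zero (sub_ne_zero.2 hcv)) (exp_pos _)⟩

theorem strictMono_V : StrictMono V := by
  refine strictMono_of_deriv_pos fun x => ?_
  have hx : x ∈ interior (integrableExpSet cos (volume.restrict (Ioc 0 (2 * π)))) := by
    simp [integrableExpSet_cos]
  have hderiv2 (f : ℝ → ℝ) : deriv (deriv f) = iteratedDeriv 2 f := by
    rw [iteratedDeriv_succ, iteratedDeriv_one]
  rw [V_eq_deriv_cgf, hderiv2, iteratedDeriv_two_cgf_eq_integral hx, mgf,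
    ← integral_of_le two_pi_pos.le, ← integral_of_le two_pi_pos.le]
  exact div_pos (integral_sq_cos_sub_mul_exp_pos _ _) (integral_exp_mul_cos_pos x)

theorem V_zero : V 0 = 0 := by
  simp [V, integral_cos]

theorem strictAntiOn_V_mul_div {c : ℝ} (hc : 0 < c) :
    StrictAntiOn (fun s => V (c * s) / s) (Ioi 0) := by
  intro s (hs : 0 < s) t (ht : 0 < t) hst
  have := strictAntiOn_V_div (mul_pos hc hs) (mul_pos hc ht) (mul_lt_mul_of_pos_left hst hc)
  simp only [div_mul_eq_div_div_swap] at this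
  exact (div_lt_div_iff_of_pos_right hc).1 this

theorem ordered_solutions (K L r r₁ r₂ : ℝ) (hL : L < 0)
    (hr : r ∈ Set.Ioo (0:ℝ) 1) (hr₁ : r₁ ∈ Set.Ioo (0:ℝ) 1) (hr₂ : r₂ ∈ Set.Ioo (0:ℝ) 1)
    (e : r = V ((K + L) * r))
    (e₁ : r₁ = V (K * r₁ + L * r₂)) (e₂ : r₂ = V (K * r₂ + L * r₁))
    (h12 : r₂ < r₁) :
    r₂ < r ∧ r < r₁ := by
  obtain ⟨hr, -⟩ := hr
  obtain ⟨hr₁, -⟩ := hr₁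
  obtain ⟨hr₂, -⟩ := hr₂
  have hc : 0 < K + L := by
    refine pos_of_mul_pos_left (strictMono_V.lt_iff_lt.1 ?_) hr.le
    rwa [V_zero, ← e]
  have hLr : L * r₁ < L * r₂ := mul_lt_mul_of_neg_left h12 hL
  have hφ := strictAntiOn_V_mul_div hc
  have hφr : V ((K + L) * r) / r = 1 := by rw [← e, div_self hr.ne']
  have hφr₁ : V ((K + L) * r₁) / r₁ < 1 := by
    rw [div_lt_one hr₁]
    conv_rhs => rw [e₁]
    exact strictMono_V (by linarith)
  have hφr₂ : 1 < V ((K + L) * r₂) / r₂ := by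
    rw [one_lt_div hr₂]
    conv_lhs => rw [e₂]
    exact strictMono_V (by linarith)
  exact ⟨(hφ.lt_iff_gt hr hr₂).1 (hφr ▸ hφr₂), (hφ.lt_iff_gt hr₁ hr).1 (hφr ▸ hφr₁)⟩
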